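/- Let n ≥ 2 and d ≥ 2, and let W be the span in EuclideanSpace ℂ (Fin n → Fin d) of the states {G_n^k : 0 ≤ k ≤ n(d−1)}. Then the n-qudit space decomposes as the orthogonal direct sum of: (i) the span of the two coordinate basis vectors e_{(0,…,0)} and e_{(d−1,…,d−1)}; (ii) the span of {G_n^k : 1 ≤ k ≤ n(d−1)−1}, which has finrank n(d−1) − 1 and all of whose nonzero vectors are GME; and (iii) the orthogonal complement Wᗮ, which has finrank d^n − n(d−1) − 1 and contains no nonzero fully product vector (a CES of the maximal possible dimension). -/

import Mathlib

/-!
Everything is governed by the weight `i₁ + ⋯ + iₙ` of a basis index: `G_n^k` is the indicator of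
the weight-`k` level, so the `G_n^k` are pairwise orthogonal and nonzero exactly for
`k ≤ n(d-1)`, and `G_n^0`, `G_n^{n(d-1)}` are the two extreme basis vectors.

A vector orthogonal to every `G_n^k` has vanishing level sums, i.e. its generating polynomial
`∑ᵢ ψᵢ X^(weight i)` is zero. For a product vector this polynomial factors as
`∏ⱼ ∑ₓ φⱼ(x) Xˣ`, so some factor `φⱼ` vanishes.

A vector in the span of the inner `G_n^k` is a function `f` of the weight with
`f 0 = f (n(d-1)) = 0`. If it factors as `φ(a) χ(b)` across a bipartition, take the lowest
weights `p`, `q` at which `φ`, `χ` are nonzero. Moving one unit of weight from one side to the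
other keeps the value of `f`, so minimality forces `p = 0` or `q` maximal, and `q = 0` or `p`
maximal. Both sides being nonempty, this leaves only the levels `0` and `n(d-1)`, where `f`
vanishes.
-/

open Finset Polynomial

/-- The unnormalized `n`-qudit state `G_n^k`, the uniform superposition of all basis
vectors `|i₁⋯iₙ⟩` with `i₁ + ⋯ + iₙ = k`. -/
noncomputable def gState (n d k : ℕ) : EuclideanSpace ℂ (Fin n → Fin d) :=
  WithLp.toLp 2 (fun i => if (∑ j, ((i j : ℕ))) = k then 1 else 0)

/-- A vector of the `n`-qudit space is *fully product* if it is a simple tensor. -/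
def FullyProduct {n d : ℕ} (ψ : EuclideanSpace ℂ (Fin n → Fin d)) : Prop :=
  ∃ φ : Fin n → Fin d → ℂ, ∀ i, ψ i = ∏ j, φ j (i j)

/-- `ψ` is biseparable across the bipartition `(S, Sᶜ)` of the `n` qudits. -/
def Biseparable {n d : ℕ} (S : Set (Fin n))
    (ψ : EuclideanSpace ℂ (Fin n → Fin d)) : Prop :=
  ∃ (φ : ((j : S) → Fin d) → ℂ) (χ : ((j : ↥Sᶜ) → Fin d) → ℂ),
    ∀ i, ψ i = φ (fun j => i j.val) * χ (fun j => i j.val)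

/-- A nonzero vector is genuinely multipartite entangled if it is not biseparable
across any nontrivial bipartition. -/
def GME {n d : ℕ} (ψ : EuclideanSpace ℂ (Fin n → Fin d)) : Prop :=
  ψ ≠ 0 ∧ ∀ S : Set (Fin n), S ≠ ∅ → S ≠ Set.univ → ¬ Biseparable S ψ

namespace Qudit

variable {d : ℕ} {ι κ : Type*} [Fintype ι] [Fintype κ]

def weight (a : ι → Fin d) : ℕ := ∑ j, (a j : ℕ)

theorem weight_le (a : ι → Fin d) : weight a ≤ Fintype.card ι * (d - 1) := by
  simpa [weight] using sum_le_card_nsmul univ (fun j => (a j : ℕ)) (d - 1) fun j _ => by omega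

theorem weight_eq_zero_iff (a : ι → Fin d) : weight a = 0 ↔ ∀ j, (a j : ℕ) = 0 := by
  simp [weight]

theorem weight_eq_top_iff (a : ι → Fin d) :
    weight a = Fintype.card ι * (d - 1) ↔ ∀ j, (a j : ℕ) = d - 1 := by
  simpa [weight, mul_comm] using sum_eq_sum_iff_of_le (s := univ) (f := fun j => (a j : ℕ))
    (g := fun _ => d - 1) fun j _ => by omega

theorem exists_weight_eq_of_fin [NeZero d] :
    ∀ {m s : ℕ}, s ≤ m * (d - 1) → ∃ a : Fin m → Fin d, weight a = s
  | 0, s, hs => ⟨finZeroElim, by simp_all [weight]⟩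
  | m + 1, s, hs => by
    have := NeZero.pos d
    obtain ⟨a, ha⟩ := exists_weight_eq_of_fin (m := m) (s := s - min s (d - 1))
      (by rw [Nat.succ_mul] at hs; omega)
    refine ⟨Fin.cons ⟨min s (d - 1), by omega⟩ a, ?_⟩
    simp only [weight, Fin.sum_univ_succ, Fin.cons_zero, Fin.cons_succ] at ha ⊢
    omega

theorem exists_weight_eq [NeZero d] {s : ℕ} (hs : s ≤ Fintype.card ι * (d - 1)) :
    ∃ a : ι → Fin d, weight a = s := by
  obtain ⟨a, rfl⟩ := exists_weight_eq_of_fin hs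
  exact ⟨a ∘ Fintype.equivFin ι, Equiv.sum_comp (Fintype.equivFin ι) fun j => (a j : ℕ)⟩

theorem weight_eq_add_weight_subtype (p : ι → Prop) [DecidablePred p] (a : ι → Fin d) :
    weight a = weight (fun j : {j // p j} => a j) + weight (fun j : {j // ¬p j} => a j) :=
  (Fintype.sum_subtype_add_sum_subtype p fun j => (a j : ℕ)).symm

section Bipartite

variable {f : ℕ → ℂ} {φ : (ι → Fin d) → ℂ} {χ : (κ → Fin d) → ℂ}

theorem weight_eq_zero_or_eq_top_of_isMin [NeZero d]
    (h : ∀ a b, φ a * χ b = f (weight a + weight b)) {a₀ : ι → Fin d} {b₀ : κ → Fin d}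
    (hne : φ a₀ * χ b₀ ≠ 0) (hmin : ∀ a, φ a ≠ 0 → weight a₀ ≤ weight a) :
    weight a₀ = 0 ∨ weight b₀ = Fintype.card κ * (d - 1) := by
  by_contra! ⟨ha₀, hb₀⟩
  have := weight_le a₀
  have := weight_le b₀
  obtain ⟨a, ha⟩ := exists_weight_eq (ι := ι) (d := d) (s := weight a₀ - 1) (by omega)
  obtain ⟨b, hb⟩ := exists_weight_eq (ι := κ) (d := d) (s := weight b₀ + 1) (by omega)
  have hab : φ a * χ b ≠ 0 := by
    rwa [h, ha, hb, show weight a₀ - 1 + (weight b₀ + 1) = weight a₀ + weight b₀ by omega, ← h]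
  have := hmin a (left_ne_zero_of_mul hab)
  omega

theorem mul_eq_zero_of_eq_levelwise (hd : 2 ≤ d) [Nonempty ι] [Nonempty κ]
    (h : ∀ a b, φ a * χ b = f (weight a + weight b)) (h0 : f 0 = 0)
    (htop : f (Fintype.card ι * (d - 1) + Fintype.card κ * (d - 1)) = 0) (a : ι → Fin d)
    (b : κ → Fin d) : φ a * χ b = 0 := by
  classical
  by_contra hab
  have : NeZero d := ⟨by omega⟩
  obtain ⟨a₀, ha₀, hmin_a⟩ := (univ.filter (φ · ≠ 0)).exists_min_image weight
    ⟨a, by simpa using left_ne_zero_of_mul hab⟩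
  obtain ⟨b₀, hb₀, hmin_b⟩ := (univ.filter (χ · ≠ 0)).exists_min_image weight
    ⟨b, by simpa using right_ne_zero_of_mul hab⟩
  have hne : φ a₀ * χ b₀ ≠ 0 := mul_ne_zero (by simpa using ha₀) (by simpa using hb₀)
  have h₁ := weight_eq_zero_or_eq_top_of_isMin h hne fun a ha => hmin_a a (by simpa using ha)
  have h₂ := weight_eq_zero_or_eq_top_of_isMin (φ := χ) (χ := φ)
    (fun b a => by rw [mul_comm, add_comm, h]) (by rwa [mul_comm])
    fun b hb => hmin_b b (by simpa using hb)
  have hι : 0 < Fintype.card ι * (d - 1) := Nat.mul_pos Fintype.card_pos (by omega)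
  have hκ : 0 < Fintype.card κ * (d - 1) := Nat.mul_pos Fintype.card_pos (by omega)
  have hlow : weight a₀ + weight b₀ ≠ 0 := fun h' => hne (by rw [h, h', h0])
  have hhigh : weight a₀ + weight b₀ ≠ Fintype.card ι * (d - 1) + Fintype.card κ * (d - 1) :=
    fun h' => hne (by rw [h, h', htop])
  omega

end Bipartite

section GeneratingPolynomial

variable [DecidableEq ι] {R : Type*} [CommRing R]

noncomputable def levelPoly (ψ : (ι → Fin d) → R) : R[X] :=
  ∑ i, C (ψ i) * X ^ weight i

theorem coeff_levelPoly (ψ : (ι → Fin d) → R) (k : ℕ) :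
    (levelPoly ψ).coeff k = ∑ i with weight i = k, ψ i := by
  simp [levelPoly, finsetSum_coeff, sum_filter, eq_comm]

theorem levelPoly_prod (φ : ι → Fin d → R) :
    levelPoly (fun i => ∏ j, φ j (i j)) = ∏ j, ∑ x, C (φ j x) * X ^ (x : ℕ) := by
  simp [Fintype.prod_sum, levelPoly, weight, prod_mul_distrib, prod_pow_eq_pow_sum]

theorem prod_eq_zero_of_sum_weight_eq_zero [IsDomain R] (φ : ι → Fin d → R)
    (h : ∀ k, ∑ i with weight i = k, ∏ j, φ j (i j) = 0) (i : ι → Fin d) :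
    ∏ j, φ j (i j) = 0 := by
  have hpoly : ∏ j, ∑ x, C (φ j x) * X ^ (x : ℕ) = 0 := by
    rw [← levelPoly_prod]
    ext k
    rw [coeff_levelPoly, h, coeff_zero]
  obtain ⟨j, -, hj⟩ := prod_eq_zero_iff.mp hpoly
  have hφj (x : Fin d) : φ j x = 0 := by
    simpa [finsetSum_coeff, coeff_C_mul_X_pow, Fin.val_inj] using congr_arg (coeff · x) hj
  exact prod_eq_zero (mem_univ j) (hφj (i j))

end GeneratingPolynomial

end Qudit

open Qudit
open scoped InnerProductSpace

section GState

variable {n d : ℕ}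

theorem gState_apply (k : ℕ) (i : Fin n → Fin d) :
    gState n d k i = if weight i = k then 1 else 0 := rfl

theorem inner_gState_left (k : ℕ) (ψ : EuclideanSpace ℂ (Fin n → Fin d)) :
    ⟪gState n d k, ψ⟫_ℂ = ∑ i with weight i = k, ψ i := by
  simp [PiLp.inner_apply, gState_apply, sum_filter]

theorem inner_gState_gState_of_ne {k l : ℕ} (h : k ≠ l) :
    ⟪gState n d k, gState n d l⟫_ℂ = 0 := by
  rw [inner_gState_left]
  exact sum_eq_zero fun i hi => by simp [gState_apply, (mem_filter.mp hi).2, h]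

theorem gState_ne_zero [NeZero d] {k : ℕ} (hk : k ≤ n * (d - 1)) : gState n d k ≠ 0 := by
  obtain ⟨i, hi⟩ := exists_weight_eq (ι := Fin n) (d := d) (by simpa using hk)
  intro h
  simpa [gState_apply, hi] using congr_arg (· i) h

theorem isOrtho_span_gState {K L : Set ℕ} (h : Disjoint K L) :
    Submodule.span ℂ (gState n d '' K) ⟂ Submodule.span ℂ (gState n d '' L) := by
  rw [Submodule.isOrtho_span]
  rintro _ ⟨k, hk, rfl⟩ _ ⟨l, hl, rfl⟩
  exact inner_gState_gState_of_ne (h.ne_of_mem hk hl)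

theorem finrank_span_gState [NeZero d] (K : Finset ℕ) (hK : ∀ k ∈ K, k ≤ n * (d - 1)) :
    Module.finrank ℂ (Submodule.span ℂ (gState n d '' K)) = K.card := by
  have hli : LinearIndependent ℂ fun k : (K : Set ℕ) => gState n d k :=
    linearIndependent_of_ne_zero_of_inner_eq_zero (fun k => gState_ne_zero (hK k k.2))
      fun k l hkl => inner_gState_gState_of_ne (Subtype.coe_injective.ne hkl)
  rw [Set.image_eq_range, finrank_span_eq_card hli]
  simp

theorem finrank_orthogonal_span_gState_Iic [NeZero d] :
    Module.finrank ℂ (Submodule.span ℂ (gState n d '' ↑(Finset.Iic (n * (d - 1)))))ᗮ =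
      d ^ n - n * (d - 1) - 1 := by
  have := Submodule.finrank_add_finrank_orthogonal
    (Submodule.span ℂ (gState n d '' ↑(Finset.Iic (n * (d - 1)))))
  rw [finrank_span_gState _ fun k hk => by simpa using hk, Nat.card_Iic, finrank_euclideanSpace,
    Fintype.card_fun, Fintype.card_fin, Fintype.card_fin] at this
  omega

theorem single_zero_eq_gState (hd : 0 < d) :
    EuclideanSpace.single (fun _ : Fin n => (⟨0, hd⟩ : Fin d)) (1 : ℂ) = gState n d 0 := by
  ext i
  simp [PiLp.single_apply, gState_apply, weight_eq_zero_iff, funext_iff, Fin.ext_iff]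

theorem single_top_eq_gState (hd : d - 1 < d) :
    EuclideanSpace.single (fun _ : Fin n => (⟨d - 1, hd⟩ : Fin d)) (1 : ℂ) =
      gState n d (n * (d - 1)) := by
  ext i
  have := weight_eq_top_iff (d := d) i
  simp only [Fintype.card_fin] at this
  simp [PiLp.single_apply, gState_apply, this, funext_iff, Fin.ext_iff]

end GState

section Entanglement

variable {n d : ℕ}

theorem exists_eq_levelwise_of_mem_span_gState {K : Set ℕ} {ψ : EuclideanSpace ℂ (Fin n → Fin d)}
    (hψ : ψ ∈ Submodule.span ℂ (gState n d '' K)) :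
    ∃ f : ℕ → ℂ, (∀ k ∉ K, f k = 0) ∧ ∀ i, ψ i = f (weight i) := by
  induction hψ using Submodule.span_induction with
  | mem _ hx =>
    obtain ⟨k, hk, rfl⟩ := hx
    exact ⟨fun m => if m = k then 1 else 0, fun m hm => if_neg (by rintro rfl; exact hm hk),
      fun i => rfl⟩
  | zero => exact ⟨0, fun _ _ => rfl, fun _ => rfl⟩
  | add _ _ _ _ hx hy =>
    obtain ⟨f, hfK, hf⟩ := hx
    obtain ⟨g, hgK, hg⟩ := hy
    exact ⟨f + g, fun k hk => by simp [hfK k hk, hgK k hk], fun i => by simp [hf, hg]⟩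
  | smul c _ _ hx =>
    obtain ⟨f, hfK, hf⟩ := hx
    exact ⟨c • f, fun k hk => by simp [hfK k hk], fun i => by simp [hf]⟩

theorem gme_of_eq_levelwise (hd : 2 ≤ d) {ψ : EuclideanSpace ℂ (Fin n → Fin d)} (hψ : ψ ≠ 0)
    {f : ℕ → ℂ} (hf : ∀ i, ψ i = f (weight i)) (h0 : f 0 = 0) (htop : f (n * (d - 1)) = 0) :
    GME ψ := by
  classical
  refine ⟨hψ, fun S hS hS' ⟨φ, χ, hsep⟩ => hψ ?_⟩
  have : Nonempty S := (Set.nonempty_iff_ne_empty.mpr hS).to_subtype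
  have : Nonempty ↥Sᶜ := (Set.nonempty_compl.mpr hS').to_subtype
  let e := Equiv.piEquivPiSubtypeProd (· ∈ S) fun _ => Fin d
  have hsplit (a : S → Fin d) (b : ↥Sᶜ → Fin d) : φ a * χ b = f (weight a + weight b) := by
    have ha : (fun j : S => e.symm (a, b) j) = a := congr_arg Prod.fst (e.apply_symm_apply _)
    have hb : (fun j : ↥Sᶜ => e.symm (a, b) j) = b := congr_arg Prod.snd (e.apply_symm_apply _)
    calc φ a * χ b = φ (fun j : S => e.symm (a, b) j) * χ (fun j : ↥Sᶜ => e.symm (a, b) j) := by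
          rw [ha, hb]
      _ = f (weight a + weight b) := by
          rw [← hsep, hf, weight_eq_add_weight_subtype (· ∈ S)]
          exact congr_arg₂ (fun a b => f (weight a + weight b)) ha hb
  have hcard : Fintype.card S + Fintype.card ↥Sᶜ = n := by
    have := set_fintype_card_le_univ S
    rw [Fintype.card_compl_set, Fintype.card_fin] at *
    omega
  ext i
  rw [hsep, mul_eq_zero_of_eq_levelwise hd hsplit h0 (by rwa [← add_mul, hcard])]
  rfl

theorem FullyProduct.eq_zero_of_inner_gState_eq_zero {ψ : EuclideanSpace ℂ (Fin n → Fin d)}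
    (hψ : FullyProduct ψ) (h : ∀ k ≤ n * (d - 1), ⟪gState n d k, ψ⟫_ℂ = 0) : ψ = 0 := by
  obtain ⟨φ, hφ⟩ := hψ
  have hsum (k : ℕ) : ∑ i with weight i = k, ∏ j, φ j (i j) = 0 := by
    by_cases hk : k ≤ n * (d - 1)
    · simp_rw [← hφ, ← inner_gState_left]
      exact h k hk
    · refine sum_eq_zero fun i hi => absurd (mem_filter.mp hi).2 ?_
      have := weight_le i
      rw [Fintype.card_fin] at this
      omega
  ext i
  rw [hφ, prod_eq_zero_of_sum_weight_eq_zero φ hsum]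
  rfl

end Entanglement

/-- Theorem 6: the `n`-qudit Hilbert space decomposes as the orthogonal direct sum
`span{|0…0⟩, |d−1 … d−1⟩} ⊕ GES_{n(d−1)−1} ⊕ CES_{d^n − n(d−1) − 1}`, the last
summand being a completely entangled subspace of the maximal possible dimension. -/
theorem nqudit_segre_veronese_decomposition (n d : ℕ) (hd : 2 ≤ d)
    (W : Submodule ℂ (EuclideanSpace ℂ (Fin n → Fin d)))
    (hW : W = Submodule.span ℂ {v | ∃ k ≤ n * (d - 1), v = gState n d k})
    (A : Submodule ℂ (EuclideanSpace ℂ (Fin n → Fin d)))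
    (hA : A = Submodule.span ℂ
        {EuclideanSpace.single (fun _ => (⟨0, by omega⟩ : Fin d)) (1 : ℂ),
         EuclideanSpace.single (fun _ => (⟨d - 1, by omega⟩ : Fin d)) (1 : ℂ)})
    (B : Submodule ℂ (EuclideanSpace ℂ (Fin n → Fin d)))
    (hB : B = Submodule.span ℂ
        {v | ∃ k, 1 ≤ k ∧ k ≤ n * (d - 1) - 1 ∧ v = gState n d k}) :
    Submodule.IsOrtho A B ∧ Submodule.IsOrtho A Wᗮ ∧ Submodule.IsOrtho B Wᗮ ∧
    A ⊔ B ⊔ Wᗮ = ⊤ ∧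
    Module.finrank ℂ ↥B = n * (d - 1) - 1 ∧
    (∀ ψ ∈ B, ψ ≠ 0 → GME ψ) ∧
    Module.finrank ℂ ↥(Wᗮ) = d ^ n - n * (d - 1) - 1 ∧
    (∀ ψ ∈ Wᗮ, FullyProduct ψ → ψ = 0) := by
  have : NeZero d := ⟨by omega⟩
  set M := n * (d - 1)
  have hW' : W = Submodule.span ℂ (gState n d '' ↑(Finset.Iic M)) := by
    rw [hW]; congr; ext; simp [eq_comm]
  have hA' : A = Submodule.span ℂ (gState n d '' {0, M}) := by
    rw [hA, single_zero_eq_gState, single_top_eq_gState, Set.image_pair]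
  have hB' : B = Submodule.span ℂ (gState n d '' ↑(Finset.Icc 1 (M - 1))) := by
    rw [hB]; congr; ext; simp [eq_comm, and_assoc]
  have hAB : A ⊔ B = W := by
    rw [hA', hB', hW', ← Submodule.span_union, ← Set.image_union]
    congr; ext
    simp only [coe_Icc, coe_Iic, Set.mem_union, Set.mem_insert_iff, Set.mem_singleton_iff,
      Set.mem_Icc, Set.mem_Iic]
    omega
  refine ⟨?_, ?_, ?_, ?_, ?_, ?_, ?_, ?_⟩
  · rw [hA', hB']
    exact isOrtho_span_gState (by
      simp only [coe_Icc, Set.disjoint_insert_left, Set.disjoint_singleton_left, Set.mem_Icc]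
      omega)
  · exact W.isOrtho_orthogonal_right.mono_left (hAB ▸ le_sup_left)
  · exact W.isOrtho_orthogonal_right.mono_left (hAB ▸ le_sup_right)
  · rw [hAB, Submodule.sup_orthogonal_of_hasOrthogonalProjection]
  · rw [hB', finrank_span_gState _ fun k hk => by simp only [mem_Icc] at hk; omega, Nat.card_Icc]
    omega
  · intro ψ hψ hne
    obtain ⟨f, hfK, hf⟩ := exists_eq_levelwise_of_mem_span_gState (hB' ▸ hψ)
    exact gme_of_eq_levelwise hd hne hf (hfK 0 (by simp))
      (hfK M (by simp only [coe_Icc, Set.mem_Icc]; omega))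
  · rw [hW', finrank_orthogonal_span_gState_Iic]
  · exact fun ψ hψ hprod => hprod.eq_zero_of_inner_gState_eq_zero fun k hk =>
      W.inner_right_of_mem_orthogonal (hW ▸ Submodule.subset_span ⟨k, hk, rfl⟩) hψ
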